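/- Let p = 1 and fix positive constants α, δ, ε, K. Suppose P and Q are Borel probability measures on ℝ with P(B_m) + Q(B_m) ≤ K·2^{−(2+δ)m} for all m ≥ 0, and |P(π_m^{−1}(F) ∩ B_m) − Q(π_m^{−1}(F) ∩ B_m)| ≤ K (2+α)^{−m} ε for all m ≤ M, F ∈ 𝒫_l, l ≤ L. Then W_1(P,Q) ≤ K'·(2^{−L} + L ε + 2^{−(1+δ)M}) with K' depending only on α, K. -/

import Mathlib

/-!
On each annulus `B_m` with `m ≤ M` the two measures are coupled by a multiscale scheme on
`(-2^m, 2^m]`: couple the two halves recursively, then match as much of the leftover mass as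
possible inside the parent interval. Mass matched at the finest level `L` moves at most
`2^(m+1) 2^(-L)`, and at each of the `L` levels the mass left unmatched is bounded by the cell
discrepancies `K (2+α)^(-m) ε` and moves at most `2^(m+1)`. What remains unmatched (the
discrepancy of `B_m` itself, and all of the mass outside `(-2^M, 2^M]`) is routed through the
origin at cost `|x| ≤ 2^m`, which the tail bound makes summable. Summing over `m`, the factors
`2^m (2+α)^(-m)` and `2^m 2^(-(2+δ)m)` form geometric series.
-/

open MeasureTheory ENNReal

/-- `WpPow p P Q`: the `p`-th power of the order-`p` Wasserstein distance,
as the infimum over couplings of `∫ |x-y|^p dπ`. -/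
noncomputable def WpPow (p : ℝ) (P Q : Measure ℝ) : ℝ≥0∞ :=
  ⨅ (π : Measure (ℝ × ℝ)) (_ : π.map Prod.fst = P) (_ : π.map Prod.snd = Q),
    ∫⁻ z, ENNReal.ofReal (|z.1 - z.2| ^ p) ∂π

/-- Dyadic annuli: `B 0 = (-1,1]`, `B m = (-2^m,2^m] \ (-2^(m-1),2^(m-1)]`. -/
def dyadicB : ℕ → Set ℝ
  | 0 => Set.Ioc (-1) 1
  | (m + 1) => Set.Ioc (-(2 : ℝ) ^ (m + 1)) ((2 : ℝ) ^ (m + 1)) \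
      Set.Ioc (-(2 : ℝ) ^ m) ((2 : ℝ) ^ m)

/-- The `j`-th cell of the partition `𝒫_l` of `(-1,1]` into `2^l` intervals. -/
noncomputable def dyadicCell (l j : ℕ) : Set ℝ :=
  Set.Ioc (-1 + j * (2 : ℝ) ^ ((1 : ℝ) - l)) (-1 + (j + 1) * (2 : ℝ) ^ ((1 : ℝ) - l))

/-- `π_m⁻¹(F) ∩ B_m` where `π_m(x) = x / 2^m` and `F` is the `j`-th cell of `𝒫_l`. -/
noncomputable def cellInAnnulus (m l j : ℕ) : Set ℝ :=
  ((fun x : ℝ => x / (2 : ℝ) ^ m) ⁻¹' dyadicCell l j) ∩ dyadicB m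

open Set

section Subcoupling

variable {X Y : Type*} [MeasurableSpace X] [MeasurableSpace Y]

def IsSubcoupling (π : Measure (X × Y)) (μ : Measure X) (ν : Measure Y) : Prop :=
  π.fst ≤ μ ∧ π.snd ≤ ν

namespace IsSubcoupling

variable {π π₁ π₂ : Measure (X × Y)} {μ μ₁ μ₂ : Measure X} {ν ν₁ ν₂ : Measure Y}

lemma zero : IsSubcoupling (0 : Measure (X × Y)) μ ν := by
  simp [IsSubcoupling, Measure.zero_le]

lemma add (h₁ : IsSubcoupling π₁ μ₁ ν₁) (h₂ : IsSubcoupling π₂ μ₂ ν₂) :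
    IsSubcoupling (π₁ + π₂) (μ₁ + μ₂) (ν₁ + ν₂) :=
  ⟨Measure.fst_add.trans_le (add_le_add h₁.1 h₂.1),
    Measure.snd_add.trans_le (add_le_add h₁.2 h₂.2)⟩

lemma measure_univ_le_left (h : IsSubcoupling π μ ν) : π univ ≤ μ univ := by
  simpa only [Measure.fst_univ] using h.1 univ

lemma measure_univ_le_right (h : IsSubcoupling π μ ν) : π univ ≤ ν univ := by
  simpa only [Measure.snd_univ] using h.2 univ

lemma fst_eq [IsFiniteMeasure μ] (h : IsSubcoupling π μ ν) (hπ : π univ = μ univ) :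
    π.fst = μ :=
  have : IsFiniteMeasure π.fst := isFiniteMeasure_of_le μ h.1
  Measure.eq_of_le_of_measure_univ_eq h.1 (by rw [Measure.fst_univ, hπ])

lemma snd_eq [IsFiniteMeasure ν] (h : IsSubcoupling π μ ν) (hπ : π univ = ν univ) :
    π.snd = ν :=
  have : IsFiniteMeasure π.snd := isFiniteMeasure_of_le ν h.2
  Measure.eq_of_le_of_measure_univ_eq h.2 (by rw [Measure.snd_univ, hπ])

lemma sub_fst_apply_univ [IsFiniteMeasure μ] (h : IsSubcoupling π μ ν) :
    (μ - π.fst) univ = μ univ - π univ :=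
  have : IsFiniteMeasure π.fst := isFiniteMeasure_of_le μ h.1
  by rw [Measure.sub_apply MeasurableSet.univ h.1, Measure.fst_univ]

lemma sub_snd_apply_univ [IsFiniteMeasure ν] (h : IsSubcoupling π μ ν) :
    (ν - π.snd) univ = ν univ - π univ :=
  have : IsFiniteMeasure π.snd := isFiniteMeasure_of_le ν h.2
  by rw [Measure.sub_apply MeasurableSet.univ h.2, Measure.snd_univ]

end IsSubcoupling

lemma Measure.smul_le_self_of_le_one {μ : Measure X} {c : ℝ≥0∞} (hc : c ≤ 1) : c • μ ≤ μ :=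
  fun s => by simpa using mul_le_of_le_one_left' hc

-- Scaling `μ.prod ν` by `1 / max (μ univ) (ν univ)` makes its mass `min (μ univ) (ν univ)`.
lemma exists_isSubcoupling_prod (μ : Measure X) (ν : Measure Y) [IsFiniteMeasure μ]
    [IsFiniteMeasure ν] :
    ∃ π, IsSubcoupling π μ ν ∧ π univ = min (μ univ) (ν univ) ∧ π ≪ μ.prod ν := by
  set c := (max (μ univ) (ν univ))⁻¹
  have hc : ∀ a, a ≤ max (μ univ) (ν univ) → a * c ≤ 1 := fun a ha =>
    ENNReal.div_le_of_le_mul (by rwa [one_mul])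
  refine ⟨c • μ.prod ν, ⟨?_, ?_⟩, ?_, Measure.smul_absolutelyContinuous⟩
  · rw [Measure.fst, Measure.map_smul, Measure.map_fst_prod, smul_smul]
    exact Measure.smul_le_self_of_le_one (by rw [mul_comm]; exact hc _ (le_max_right _ _))
  · rw [Measure.snd, Measure.map_smul, Measure.map_snd_prod, smul_smul]
    exact Measure.smul_le_self_of_le_one (by rw [mul_comm]; exact hc _ (le_max_left _ _))
  rw [Measure.smul_apply, ← univ_prod_univ, Measure.prod_prod, smul_eq_mul]
  rcases le_total (μ univ) (ν univ) with h | h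
  · rw [min_eq_left h]
    simp only [c, max_eq_right h]
    rcases eq_or_ne (ν univ) 0 with h0 | h0
    · simp [h0, nonpos_iff_eq_zero.1 (h.trans h0.le)]
    · rw [mul_comm (μ univ), ← mul_assoc, ENNReal.inv_mul_cancel h0 (measure_ne_top _ _), one_mul]
  · rw [min_eq_right h]
    simp only [c, max_eq_left h]
    rcases eq_or_ne (μ univ) 0 with h0 | h0
    · simp [h0, nonpos_iff_eq_zero.1 (h.trans h0.le)]
    · rw [← mul_assoc, ENNReal.inv_mul_cancel h0 (measure_ne_top _ _), one_mul]

lemma Measure.prod_compl_prod_eq_zero {μ : Measure X} {ν : Measure Y} [SFinite ν] {s : Set X}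
    {t : Set Y} (hs : μ sᶜ = 0) (ht : ν tᶜ = 0) : μ.prod ν (s ×ˢ t)ᶜ = 0 := by
  rw [compl_prod_eq_union]
  exact measure_union_null (by simp [Measure.prod_prod, hs]) (by simp [Measure.prod_prod, ht])

end Subcoupling

section TransportCost

variable {X : Type*} [MeasurableSpace X] [PseudoEMetricSpace X]

noncomputable def transportCost (π : Measure (X × X)) : ℝ≥0∞ := ∫⁻ z, edist z.1 z.2 ∂π

lemma transportCost_add (π₁ π₂ : Measure (X × X)) :
    transportCost (π₁ + π₂) = transportCost π₁ + transportCost π₂ :=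
  lintegral_add_measure _ _ _

lemma transportCost_le_ediam_mul {π : Measure (X × X)} {s : Set X} (hs : π (s ×ˢ s)ᶜ = 0) :
    transportCost π ≤ Metric.ediam s * π univ := by
  calc transportCost π ≤ ∫⁻ _, Metric.ediam s ∂π :=
        lintegral_mono_ae <| (ae_iff.2 hs).mono fun z hz => Metric.edist_le_ediam_of_mem hz.1 hz.2
    _ = Metric.ediam s * π univ := lintegral_const _

lemma lintegral_edist_le_of_le_restrict (x₀ : X) {κ μ : Measure X} {s : Set X} {r : ℝ≥0∞}
    (hs : MeasurableSet s) (hsr : s ⊆ Metric.closedEBall x₀ r) (hκ : κ ≤ μ.restrict s) :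
    ∫⁻ x, edist x x₀ ∂κ ≤ r * κ univ := by
  calc ∫⁻ x, edist x x₀ ∂κ ≤ ∫⁻ _, r ∂κ := by
        refine lintegral_mono_ae ?_
        filter_upwards [(Measure.absolutelyContinuous_of_le hκ).ae_le (ae_restrict_mem hs)]
          with x hx using hsr hx
    _ = r * κ univ := lintegral_const _

variable {π₀ π₁ π₂ : Measure (X × X)} {μ μ₁ μ₂ ν ν₁ ν₂ : Measure X}

-- The parts of `μ` and `ν` left unmatched by `π₀` are coupled by `exists_isSubcoupling_prod`.
lemma IsSubcoupling.exists_extension [IsFiniteMeasure μ] [IsFiniteMeasure ν]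
    (h : IsSubcoupling π₀ μ ν) {s : Set X} (hμ : μ sᶜ = 0) (hν : ν sᶜ = 0) :
    ∃ π, IsSubcoupling π μ ν ∧ π univ = min (μ univ) (ν univ) ∧
      transportCost π ≤ transportCost π₀ + Metric.ediam s * (min (μ univ) (ν univ) - π₀ univ) := by
  have : IsFiniteMeasure π₀.fst := isFiniteMeasure_of_le μ h.1
  have : IsFiniteMeasure π₀.snd := isFiniteMeasure_of_le ν h.2
  obtain ⟨ρ, hρ, hρ_univ, hρ_ac⟩ := exists_isSubcoupling_prod (μ - π₀.fst) (ν - π₀.snd)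
  have hsum : IsSubcoupling (π₀ + ρ) μ ν := by
    have := IsSubcoupling.add (π₁ := π₀) ⟨le_rfl, le_rfl⟩ hρ
    rwa [add_comm π₀.fst, add_comm π₀.snd, Measure.sub_add_cancel_of_le h.1,
      Measure.sub_add_cancel_of_le h.2] at this
  have hmass : π₀ univ + ρ univ = min (μ univ) (ν univ) := by
    rw [hρ_univ, h.sub_fst_apply_univ, h.sub_snd_apply_univ, ← min_add_add_left,
      add_tsub_cancel_of_le h.measure_univ_le_left, add_tsub_cancel_of_le h.measure_univ_le_right]
  refine ⟨π₀ + ρ, hsum, by rw [Measure.add_apply, hmass], ?_⟩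
  have hρ_conc : ρ (s ×ˢ s)ᶜ = 0 := hρ_ac <| Measure.prod_compl_prod_eq_zero
    (Measure.absolutelyContinuous_of_le Measure.sub_le hμ)
    (Measure.absolutelyContinuous_of_le Measure.sub_le hν)
  have hπ₀ : π₀ univ ≠ ∞ := (h.measure_univ_le_left.trans_lt (measure_lt_top μ univ)).ne
  rw [transportCost_add, ← ENNReal.eq_sub_of_add_eq hπ₀ ((add_comm _ _).trans hmass)]
  exact add_le_add le_rfl (transportCost_le_ediam_mul hρ_conc)

lemma exists_isSubcoupling_add [IsFiniteMeasure μ₁] [IsFiniteMeasure μ₂] [IsFiniteMeasure ν₁]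
    [IsFiniteMeasure ν₂] (h₁ : IsSubcoupling π₁ μ₁ ν₁) (h₂ : IsSubcoupling π₂ μ₂ ν₂)
    (hπ₁ : π₁ univ = min (μ₁ univ) (ν₁ univ)) (hπ₂ : π₂ univ = min (μ₂ univ) (ν₂ univ))
    {s : Set X} (hμ : (μ₁ + μ₂) sᶜ = 0) (hν : (ν₁ + ν₂) sᶜ = 0) :
    ∃ π, IsSubcoupling π (μ₁ + μ₂) (ν₁ + ν₂) ∧
      π univ = min ((μ₁ + μ₂) univ) ((ν₁ + ν₂) univ) ∧
      transportCost π ≤ transportCost π₁ + transportCost π₂ +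
        Metric.ediam s * ((μ₁ univ - ν₁ univ) + (μ₂ univ - ν₂ univ)) := by
  obtain ⟨π, hπ, hmass, hcost⟩ := (h₁.add h₂).exists_extension hμ hν
  refine ⟨π, hπ, hmass, hcost.trans ?_⟩
  rw [transportCost_add]
  gcongr
  calc min ((μ₁ + μ₂) univ) ((ν₁ + ν₂) univ) - (π₁ + π₂) univ
      ≤ (μ₁ univ + μ₂ univ) - (π₁ univ + π₂ univ) := by
        simp only [Measure.add_apply]
        exact tsub_le_tsub_right (min_le_left _ _) _
    _ ≤ (μ₁ univ - π₁ univ) + (μ₂ univ - π₂ univ) := add_tsub_add_le_tsub_add_tsub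
    _ = (μ₁ univ - ν₁ univ) + (μ₂ univ - ν₂ univ) := by rw [hπ₁, hπ₂, tsub_min, tsub_min]

variable [OpensMeasurableSpace X]

-- `μ'` and `ν'` are coupled by a scaled product, whose cost is at most that of moving all of
-- their mass to `x₀`.
lemma exists_coupling_transportCost_le (x₀ : X) {μ' ν' : Measure X} [IsFiniteMeasure μ]
    (hμ : π₀.fst + μ' = μ) (hν : π₀.snd + ν' = ν) (hμν : μ univ = ν univ) :
    ∃ π : Measure (X × X), π.fst = μ ∧ π.snd = ν ∧
      transportCost π ≤ transportCost π₀ + (∫⁻ x, edist x x₀ ∂μ' + ∫⁻ y, edist y x₀ ∂ν') := by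
  have : IsFiniteMeasure ν := ⟨hμν ▸ measure_lt_top μ univ⟩
  have : IsFiniteMeasure μ' := isFiniteMeasure_of_le μ (hμ ▸ Measure.le_add_left le_rfl)
  have : IsFiniteMeasure ν' := isFiniteMeasure_of_le ν (hν ▸ Measure.le_add_left le_rfl)
  have hmass : μ' univ = ν' univ := by
    have h₁ := congrArg (· univ) hμ
    have h₂ := congrArg (· univ) hν
    simp only [Measure.add_apply, Measure.fst_univ, Measure.snd_univ] at h₁ h₂
    have hπ₀ : π₀ univ ≠ ∞ := ne_top_of_le_ne_top (measure_ne_top μ univ) (h₁ ▸ le_self_add)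
    exact (ENNReal.add_right_inj hπ₀).1 (by rw [h₁, h₂, hμν])
  obtain ⟨ρ, hρ, hρ_univ, -⟩ := exists_isSubcoupling_prod μ' ν'
  have hρ₁ : ρ.fst = μ' := hρ.fst_eq (by rw [hρ_univ, hmass, min_self])
  have hρ₂ : ρ.snd = ν' := hρ.snd_eq (by rw [hρ_univ, hmass, min_self])
  refine ⟨π₀ + ρ, by rw [Measure.fst_add, hρ₁, hμ], by rw [Measure.snd_add, hρ₂, hν], ?_⟩
  rw [transportCost_add]
  gcongr
  have hmeas : Measurable fun x => edist x x₀ := (continuous_id.edist continuous_const).measurable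
  calc transportCost ρ ≤ ∫⁻ z, edist z.1 x₀ + edist z.2 x₀ ∂ρ :=
        lintegral_mono fun z => edist_triangle_right _ _ _
    _ = ∫⁻ x, edist x x₀ ∂μ' + ∫⁻ y, edist y x₀ ∂ν' := by
        rw [lintegral_add_left (f := fun z : X × X => edist z.1 x₀) (hmeas.comp measurable_fst),
          ← hρ₁, ← hρ₂, Measure.fst, Measure.snd, lintegral_map hmeas measurable_fst,
          lintegral_map hmeas measurable_snd]

theorem exists_coupling_transportCost_le_tsum (x₀ : X) {A : ℕ → Set X}
    (hA : ∀ m, MeasurableSet (A m)) (hA_disj : Pairwise (Function.onFun Disjoint A))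
    (hA_univ : ⋃ m, A m = univ) {r : ℕ → ℝ≥0∞} (hr : ∀ m, A m ⊆ Metric.closedEBall x₀ (r m))
    [IsFiniteMeasure μ] (hμν : μ univ = ν univ) {π : ℕ → Measure (X × X)}
    (hπ : ∀ m, IsSubcoupling (π m) (μ.restrict (A m)) (ν.restrict (A m))) :
    ∃ ρ : Measure (X × X), ρ.fst = μ ∧ ρ.snd = ν ∧
      transportCost ρ ≤
        ∑' m, (transportCost (π m) + r m * ((μ (A m) - π m univ) + (ν (A m) - π m univ))) := by
  have : IsFiniteMeasure ν := ⟨hμν ▸ measure_lt_top μ univ⟩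
  have hsum (κ : Measure X) : Measure.sum (fun m => κ.restrict (A m)) = κ := by
    rw [← Measure.restrict_iUnion hA_disj hA, hA_univ, Measure.restrict_univ]
  have : ∀ m, IsFiniteMeasure (π m).fst := fun m => isFiniteMeasure_of_le _ (hπ m).1
  have : ∀ m, IsFiniteMeasure (π m).snd := fun m => isFiniteMeasure_of_le _ (hπ m).2
  obtain ⟨ρ, hρ₁, hρ₂, hcost⟩ := exists_coupling_transportCost_le x₀ (π₀ := Measure.sum π)
    (μ' := Measure.sum fun m => μ.restrict (A m) - (π m).fst)
    (ν' := Measure.sum fun m => ν.restrict (A m) - (π m).snd)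
    (by
      rw [Measure.fst_sum, Measure.sum_add_sum]
      conv_rhs => rw [← hsum μ]
      congr with m : 1
      rw [add_comm, Measure.sub_add_cancel_of_le (hπ m).1])
    (by
      rw [Measure.snd_sum, Measure.sum_add_sum]
      conv_rhs => rw [← hsum ν]
      congr with m : 1
      rw [add_comm, Measure.sub_add_cancel_of_le (hπ m).2])
    hμν
  refine ⟨ρ, hρ₁, hρ₂, hcost.trans ?_⟩
  rw [transportCost, lintegral_sum_measure, lintegral_sum_measure, lintegral_sum_measure,
    ← ENNReal.tsum_add, ← ENNReal.tsum_add]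
  refine ENNReal.tsum_le_tsum fun m => add_le_add le_rfl ?_
  rw [mul_add]
  refine add_le_add
    ((lintegral_edist_le_of_le_restrict x₀ (hA m) (hr m) Measure.sub_le).trans_eq ?_)
    ((lintegral_edist_le_of_le_restrict x₀ (hA m) (hr m) Measure.sub_le).trans_eq ?_)
  · rw [(hπ m).sub_fst_apply_univ, Measure.restrict_apply_univ]
  · rw [(hπ m).sub_snd_apply_univ, Measure.restrict_apply_univ]

end TransportCost

noncomputable def dyadicSubinterval (a b : ℝ) (l j : ℕ) : Set ℝ :=
  Ioc (a + j * ((b - a) / 2 ^ l)) (a + (j + 1) * ((b - a) / 2 ^ l))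

section DyadicSubinterval

variable {a b : ℝ} {l j : ℕ}

lemma measurableSet_dyadicSubinterval (a b : ℝ) (l j : ℕ) :
    MeasurableSet (dyadicSubinterval a b l j) :=
  measurableSet_Ioc

lemma dyadicSubinterval_zero_zero (a b : ℝ) : dyadicSubinterval a b 0 0 = Ioc a b := by
  simp [dyadicSubinterval]

lemma dyadicSubinterval_subset (hab : a ≤ b) (hj : j < 2 ^ l) :
    dyadicSubinterval a b l j ⊆ Ioc a b := by
  have hstep : 0 ≤ (b - a) / 2 ^ l := div_nonneg (sub_nonneg.2 hab) (by positivity)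
  have hj' : (j : ℝ) + 1 ≤ 2 ^ l := by exact_mod_cast hj
  refine Ioc_subset_Ioc (le_add_of_nonneg_right (by positivity)) ?_
  calc a + (j + 1) * ((b - a) / 2 ^ l) ≤ a + 2 ^ l * ((b - a) / 2 ^ l) := by gcongr
    _ = b := by field_simp; ring

lemma dyadicSubinterval_left (a b : ℝ) (l j : ℕ) :
    dyadicSubinterval a ((a + b) / 2) l j = dyadicSubinterval a b (l + 1) j := by
  simp only [dyadicSubinterval, pow_succ]
  congr 1 <;> field_simp <;> ring

lemma dyadicSubinterval_right (a b : ℝ) (l j : ℕ) :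
    dyadicSubinterval ((a + b) / 2) b l j = dyadicSubinterval a b (l + 1) (j + 2 ^ l) := by
  simp only [dyadicSubinterval, pow_succ]
  push_cast
  congr 1 <;> field_simp <;> ring

lemma restrict_left_dyadicSubinterval (κ : Measure ℝ) (hab : a ≤ b) (hj : j < 2 ^ l) :
    κ.restrict (Ioc a ((a + b) / 2)) (dyadicSubinterval a ((a + b) / 2) l j) =
      κ (dyadicSubinterval a b (l + 1) j) := by
  rw [Measure.restrict_eq_self κ (dyadicSubinterval_subset (by linarith) hj),
    dyadicSubinterval_left]

lemma restrict_right_dyadicSubinterval (κ : Measure ℝ) (hab : a ≤ b) (hj : j < 2 ^ l) :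
    κ.restrict (Ioc ((a + b) / 2) b) (dyadicSubinterval ((a + b) / 2) b l j) =
      κ (dyadicSubinterval a b (l + 1) (j + 2 ^ l)) := by
  rw [Measure.restrict_eq_self κ (dyadicSubinterval_subset (by linarith) hj),
    dyadicSubinterval_right]

end DyadicSubinterval

lemma Measure.restrict_Ioc_add_restrict_Ioc {μ : Measure ℝ} {a m b : ℝ} (ham : a ≤ m)
    (hmb : m ≤ b) (hμ : μ (Ioc a b)ᶜ = 0) :
    μ.restrict (Ioc a m) + μ.restrict (Ioc m b) = μ := by
  rw [← Measure.restrict_union (Ioc_disjoint_Ioc_of_le le_rfl) measurableSet_Ioc,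
    Ioc_union_Ioc_eq_Ioc ham hmb, Measure.restrict_eq_self_of_ae_mem (ae_iff.2 hμ)]

lemma multiscale_cost_succ_le {C D A A₁ A₂ c₁ c₂ e₁ e₂ : ℝ≥0∞} {L : ℕ}
    (hc₁ : c₁ ≤ C * 2⁻¹ * (2⁻¹ ^ L * A₁ + 2 * L * D))
    (hc₂ : c₂ ≤ C * 2⁻¹ * (2⁻¹ ^ L * A₂ + 2 * L * D))
    (he₁ : e₁ ≤ D) (he₂ : e₂ ≤ D) (hA : A₁ + A₂ ≤ A) :
    c₁ + c₂ + C * (e₁ + e₂) ≤ C * (2⁻¹ ^ (L + 1) * A + 2 * ↑(L + 1) * D) :=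
  calc c₁ + c₂ + C * (e₁ + e₂)
      ≤ C * 2⁻¹ * (2⁻¹ ^ L * A₁ + 2 * L * D) + C * 2⁻¹ * (2⁻¹ ^ L * A₂ + 2 * L * D)
        + C * (D + D) := by gcongr
    _ = C * (2⁻¹ ^ (L + 1) * (A₁ + A₂) + (2⁻¹ + 2⁻¹) * (2 * L * D) + 2 * D) := by ring
    _ = C * (2⁻¹ ^ (L + 1) * (A₁ + A₂) + 2 * ↑(L + 1) * D) := by
        rw [ENNReal.inv_two_add_inv_two, one_mul]; push_cast; ring
    _ ≤ C * (2⁻¹ ^ (L + 1) * A + 2 * ↑(L + 1) * D) := by gcongr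

theorem exists_isSubcoupling_Ioc (D : ℝ≥0∞) (L : ℕ) {a b : ℝ} (hab : a ≤ b) {μ ν : Measure ℝ}
    [IsFiniteMeasure μ] [IsFiniteMeasure ν] (hμ : μ (Ioc a b)ᶜ = 0) (hν : ν (Ioc a b)ᶜ = 0)
    (hD : ∀ l, 0 < l → l ≤ L → ∀ j < 2 ^ l,
      μ (dyadicSubinterval a b l j) - ν (dyadicSubinterval a b l j) ≤ D) :
    ∃ π, IsSubcoupling π μ ν ∧ π univ = min (μ univ) (ν univ) ∧
      transportCost π ≤ ENNReal.ofReal (b - a) * (2⁻¹ ^ L * min (μ univ) (ν univ) + 2 * L * D) := by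
  induction L generalizing a b μ ν with
  | zero =>
    obtain ⟨π, hπ, hmass, hcost⟩ := IsSubcoupling.zero.exists_extension hμ hν
    refine ⟨π, hπ, hmass, hcost.trans_eq ?_⟩
    simp [transportCost, Real.ediam_Ioc]
  | succ L ih =>
    have ham : a ≤ (a + b) / 2 := by linarith
    have hmb : (a + b) / 2 ≤ b := by linarith
    have hsplit (κ : Measure ℝ) (hκ : κ (Ioc a b)ᶜ = 0) :=
      Measure.restrict_Ioc_add_restrict_Ioc ham hmb hκ
    have hhalf (x : ℝ) (hx : x = (b - a) / 2) : ENNReal.ofReal x = ENNReal.ofReal (b - a) * 2⁻¹ := by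
      rw [hx, ENNReal.ofReal_div_of_pos two_pos, ENNReal.ofReal_ofNat, div_eq_mul_inv]
    obtain ⟨π₁, h₁, hm₁, hc₁⟩ := ih ham (μ := μ.restrict (Ioc a ((a + b) / 2)))
      (ν := ν.restrict (Ioc a ((a + b) / 2)))
      (ae_iff.1 (ae_restrict_mem measurableSet_Ioc)) (ae_iff.1 (ae_restrict_mem measurableSet_Ioc))
      (fun l _ hl j hj => by
        rw [restrict_left_dyadicSubinterval μ hab hj, restrict_left_dyadicSubinterval ν hab hj]
        exact hD (l + 1) l.succ_pos (by omega) j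
          (hj.trans (Nat.pow_lt_pow_right one_lt_two l.lt_succ_self)))
    obtain ⟨π₂, h₂, hm₂, hc₂⟩ := ih hmb (μ := μ.restrict (Ioc ((a + b) / 2) b))
      (ν := ν.restrict (Ioc ((a + b) / 2) b))
      (ae_iff.1 (ae_restrict_mem measurableSet_Ioc)) (ae_iff.1 (ae_restrict_mem measurableSet_Ioc))
      (fun l _ hl j hj => by
        rw [restrict_right_dyadicSubinterval μ hab hj, restrict_right_dyadicSubinterval ν hab hj]
        exact hD (l + 1) l.succ_pos (by omega) (j + 2 ^ l) (by rw [pow_succ]; omega))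
    obtain ⟨π, hπ, hmass, hcost⟩ := exists_isSubcoupling_add h₁ h₂ hm₁ hm₂ (s := Ioc a b)
      (by rwa [hsplit μ hμ]) (by rwa [hsplit ν hν])
    rw [hsplit μ hμ, hsplit ν hν] at hπ hmass
    refine ⟨π, hπ, hmass, hcost.trans ?_⟩
    rw [Real.ediam_Ioc]
    refine multiscale_cost_succ_le (hc₁.trans_eq (by rw [hhalf _ (by ring)]))
      (hc₂.trans_eq (by rw [hhalf _ (by ring)])) ?_ ?_ ?_
    · simpa only [Measure.restrict_apply_univ, ← dyadicSubinterval_zero_zero,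
        dyadicSubinterval_left] using hD 1 one_pos (by omega) 0 (by norm_num)
    · simpa only [Measure.restrict_apply_univ, ← dyadicSubinterval_zero_zero,
        dyadicSubinterval_right] using hD 1 one_pos (by omega) (0 + 2 ^ 0) (by norm_num)
    · refine min_add_min_le_min_add_add.trans_eq ?_
      rw [← Measure.add_apply, ← Measure.add_apply, hsplit μ hμ, hsplit ν hν]

lemma dyadicB_eq_disjointed : dyadicB = disjointed fun n => Ioc (-(2 : ℝ) ^ n) (2 ^ n) := by
  have hmono : Monotone fun n : ℕ => Ioc (-(2 : ℝ) ^ n) (2 ^ n) := fun m n hmn =>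
    Ioc_subset_Ioc (neg_le_neg (pow_le_pow_right₀ one_le_two hmn))
      (pow_le_pow_right₀ one_le_two hmn)
  funext n
  cases n with
  | zero => simp [dyadicB, disjointed_zero]
  | succ n => exact (hmono.disjointed_succ (not_isMax n)).symm

lemma measurableSet_dyadicB (m : ℕ) : MeasurableSet (dyadicB m) := by
  rw [dyadicB_eq_disjointed]; exact MeasurableSet.disjointed (fun _ => measurableSet_Ioc) m

lemma pairwise_disjoint_dyadicB : Pairwise (Function.onFun Disjoint dyadicB) := by
  rw [dyadicB_eq_disjointed]; exact disjoint_disjointed _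

lemma iUnion_dyadicB : ⋃ m, dyadicB m = univ := by
  rw [dyadicB_eq_disjointed, iUnion_disjointed, eq_univ_iff_forall]
  intro x
  obtain ⟨n, hn⟩ := pow_unbounded_of_one_lt |x| one_lt_two
  exact mem_iUnion.2 ⟨n, ⟨by linarith [neg_abs_le x], (le_abs_self x).trans hn.le⟩⟩

lemma dyadicB_subset_Ioc (m : ℕ) : dyadicB m ⊆ Ioc (-(2 : ℝ) ^ m) (2 ^ m) := by
  rw [dyadicB_eq_disjointed]; exact disjointed_subset _ m

lemma dyadicB_subset_closedEBall (m : ℕ) :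
    dyadicB m ⊆ Metric.closedEBall 0 (ENNReal.ofReal (2 ^ m)) := fun x hx => by
  have hx := dyadicB_subset_Ioc m hx
  rw [Metric.mem_closedEBall, edist_dist, Real.dist_0_eq_abs]
  exact ENNReal.ofReal_le_ofReal (abs_le.2 ⟨by linarith [hx.1], hx.2⟩)

lemma cellInAnnulus_eq (m l j : ℕ) :
    cellInAnnulus m l j = dyadicSubinterval (-2 ^ m) (2 ^ m) l j ∩ dyadicB m := by
  have h2m : (0 : ℝ) < 2 ^ m := by positivity
  rw [cellInAnnulus, dyadicCell, dyadicSubinterval, Real.rpow_sub two_pos, Real.rpow_one,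
    Real.rpow_natCast]
  congr 1
  ext x
  simp only [mem_preimage, mem_Ioc, lt_div_iff₀ h2m, div_le_iff₀ h2m]
  have e (i : ℝ) : (-1 + i * (2 / 2 ^ l)) * 2 ^ m = -2 ^ m + i * ((2 ^ m - -2 ^ m) / 2 ^ l) := by
    ring
  rw [e, e]

lemma cellInAnnulus_zero_zero (m : ℕ) : cellInAnnulus m 0 0 = dyadicB m := by
  rw [cellInAnnulus_eq, dyadicSubinterval_zero_zero, inter_eq_right.2 (dyadicB_subset_Ioc m)]

/-- The cost of `π` on the annulus `B_m`, plus that of routing the mass of `B_m` left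
unmatched by `π` through the origin. -/
noncomputable def annulusCost (P Q : Measure ℝ) (m : ℕ) (π : Measure (ℝ × ℝ)) : ℝ≥0∞ :=
  transportCost π + ENNReal.ofReal (2 ^ m) * ((P (dyadicB m) - π univ) + (Q (dyadicB m) - π univ))

lemma ENNReal.sub_le_ofReal_of_abs_toReal_sub_le {a b : ℝ≥0∞} {d : ℝ} (ha : a ≠ ∞)
    (h : |a.toReal - b.toReal| ≤ d) : a - b ≤ ENNReal.ofReal d := by
  rcases le_total a b with hab | hab
  · rw [tsub_eq_zero_of_le hab]; exact zero_le
  have hb : b ≠ ∞ := ne_top_of_le_ne_top ha hab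
  rw [tsub_le_iff_right, ← ENNReal.ofReal_toReal ha, ← ENNReal.ofReal_toReal hb,
    ← ENNReal.ofReal_add ((abs_nonneg _).trans h) ENNReal.toReal_nonneg]
  exact ENNReal.ofReal_le_ofReal (by linarith [le_abs_self (a.toReal - b.toReal)])

lemma exists_isSubcoupling_dyadicB (P Q : Measure ℝ) [IsFiniteMeasure P] [IsFiniteMeasure Q]
    (m L : ℕ) {p D : ℝ} (hp : 0 ≤ p) (hP : P (dyadicB m) ≤ ENNReal.ofReal p)
    (hD : ∀ l ≤ L, ∀ j < 2 ^ l,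
      |(P (cellInAnnulus m l j)).toReal - (Q (cellInAnnulus m l j)).toReal| ≤ D) :
    ∃ π, IsSubcoupling π (P.restrict (dyadicB m)) (Q.restrict (dyadicB m)) ∧
      annulusCost P Q m π ≤ ENNReal.ofReal (2 ^ (m + 1) * (2⁻¹ ^ L * p + (2 * L + 1) * D)) := by
  have hD₀ : 0 ≤ D := (abs_nonneg _).trans (hD 0 L.zero_le 0 one_pos)
  have hconc (κ : Measure ℝ) : κ.restrict (dyadicB m) (Ioc (-2 ^ m) (2 ^ m))ᶜ = 0 :=
    ae_iff.1 ((ae_restrict_mem (measurableSet_dyadicB m)).mono fun x hx => dyadicB_subset_Ioc m hx)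
  have hcell (κ : Measure ℝ) (l j : ℕ) :
      κ.restrict (dyadicB m) (dyadicSubinterval (-2 ^ m) (2 ^ m) l j) = κ (cellInAnnulus m l j) := by
    rw [Measure.restrict_apply (measurableSet_dyadicSubinterval _ _ _ _), cellInAnnulus_eq]
  obtain ⟨π, hπ, hmass, hcost⟩ := exists_isSubcoupling_Ioc (ENNReal.ofReal D) L
    (neg_le_self (by positivity)) (hconc P) (hconc Q) fun l _ hl j hj => by
      rw [hcell, hcell]
      exact ENNReal.sub_le_ofReal_of_abs_toReal_sub_le (measure_ne_top _ _) (hD l hl j hj)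
  simp only [Measure.restrict_apply_univ] at hmass hcost
  have hB := hD 0 L.zero_le 0 one_pos
  rw [cellInAnnulus_zero_zero] at hB
  have hlen : ENNReal.ofReal (2 ^ m - -2 ^ m) = ENNReal.ofReal (2 ^ m) * 2 := by
    rw [sub_neg_eq_add, ← two_mul, mul_comm, ENNReal.ofReal_mul (by positivity), ENNReal.ofReal_ofNat]
  refine ⟨π, hπ, ?_⟩
  calc _ ≤ ENNReal.ofReal (2 ^ m) * 2 * (2⁻¹ ^ L * ENNReal.ofReal p + 2 * L * ENNReal.ofReal D)
        + ENNReal.ofReal (2 ^ m) * (ENNReal.ofReal D + ENNReal.ofReal D) := by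
        rw [annulusCost, hmass, tsub_min, min_comm, tsub_min, ← hlen]
        refine add_le_add (hcost.trans ?_) ?_
        · gcongr
          exact (min_le_left _ _).trans hP
        · gcongr
          · exact ENNReal.sub_le_ofReal_of_abs_toReal_sub_le (measure_ne_top _ _) hB
          · exact ENNReal.sub_le_ofReal_of_abs_toReal_sub_le (measure_ne_top _ _)
              ((abs_sub_comm _ _).trans_le hB)
    _ = ENNReal.ofReal (2 ^ m) * 2 *
          (2⁻¹ ^ L * ENNReal.ofReal p + (2 * L + 1) * ENNReal.ofReal D) := by ring
    _ = ENNReal.ofReal (2 ^ (m + 1) * (2⁻¹ ^ L * p + (2 * L + 1) * D)) := by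
        rw [ENNReal.ofReal_mul (by positivity), ENNReal.ofReal_add (by positivity) (by positivity),
          ENNReal.ofReal_mul (by positivity), ENNReal.ofReal_mul (by positivity)]
        simp [pow_succ, ENNReal.ofReal_mul, ENNReal.ofReal_pow, ENNReal.ofReal_add, ENNReal.inv_pow]

lemma annulusCost_zero_le {P Q : Measure ℝ} {m : ℕ} {p : ℝ}
    (h : P (dyadicB m) + Q (dyadicB m) ≤ ENNReal.ofReal p) :
    annulusCost P Q m 0 ≤ ENNReal.ofReal (2 ^ m * p) := by
  simp only [annulusCost, transportCost, Measure.coe_zero, Pi.zero_apply, tsub_zero,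
    lintegral_zero_measure, zero_add]
  rw [ENNReal.ofReal_mul (by positivity)]
  gcongr

lemma sum_range_pow_le_inv_one_sub {r : ℝ} (h₀ : 0 ≤ r) (h₁ : r < 1) (n : ℕ) :
    ∑ i ∈ Finset.range n, r ^ i ≤ (1 - r)⁻¹ := by
  have := geom_sum_Ico_le_of_lt_one (m := 0) (n := n) h₀ h₁
  rwa [← Finset.range_eq_Ico, pow_zero, one_div] at this

lemma rpow_neg_one_add_le_inv_two {δ : ℝ} (hδ : 0 ≤ δ) : (2 : ℝ) ^ (-(1 + δ)) ≤ 2⁻¹ := by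
  calc (2 : ℝ) ^ (-(1 + δ)) ≤ 2 ^ (-1 : ℝ) :=
        Real.rpow_le_rpow_of_exponent_le one_le_two (by linarith)
    _ = 2⁻¹ := Real.rpow_neg_one 2

lemma two_pow_mul_rpow_eq_pow (δ : ℝ) (m : ℕ) :
    (2 : ℝ) ^ m * 2 ^ (-(2 + δ) * m) = ((2 : ℝ) ^ (-(1 + δ))) ^ m := by
  rw [← Real.rpow_natCast, ← Real.rpow_add two_pos, ← Real.rpow_natCast _ m,
    ← Real.rpow_mul zero_le_two]
  ring_nf

lemma sum_range_scale_le {α δ K ε : ℝ} (hα : 0 < α) (hδ : 0 ≤ δ) (hK : 0 ≤ K) (hε : 0 ≤ ε)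
    (L n : ℕ) :
    ∑ m ∈ Finset.range n, 2 ^ (m + 1) * (2⁻¹ ^ L * (K * 2 ^ (-(2 + δ) * m)) +
        (2 * L + 1) * (K * (2 + α) ^ (-(m : ℝ)) * ε))
      ≤ 4 * K * 2⁻¹ ^ L + 2 * (2 * L + 1) * K * ε * ((2 + α) / α) := by
  set r : ℝ := 2 ^ (-(1 + δ))
  have hr₀ : 0 ≤ r := by positivity
  have hr : r ≤ 2⁻¹ := rpow_neg_one_add_le_inv_two hδ
  have hs₀ : 0 ≤ 2 / (2 + α) := by positivity
  have hs₁ : 2 / (2 + α) < 1 := by rw [div_lt_one (by linarith)]; linarith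
  have hterm (m : ℕ) : 2 ^ (m + 1) * (2⁻¹ ^ L * (K * 2 ^ (-(2 + δ) * m)) +
        (2 * L + 1) * (K * (2 + α) ^ (-(m : ℝ)) * ε)) =
      2 * K * 2⁻¹ ^ L * r ^ m + 2 * (2 * L + 1) * K * ε * (2 / (2 + α)) ^ m := by
    rw [← two_pow_mul_rpow_eq_pow, Real.rpow_neg (by linarith), Real.rpow_natCast, div_pow]
    field_simp
    ring
  simp only [hterm, Finset.sum_add_distrib, ← Finset.mul_sum]
  have h₁ : ∑ m ∈ Finset.range n, r ^ m ≤ 2 :=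
    (sum_range_pow_le_inv_one_sub hr₀ (by linarith) n).trans
      (by rw [inv_le_comm₀ (by linarith) two_pos]; linarith)
  have h₂ : ∑ m ∈ Finset.range n, (2 / (2 + α)) ^ m ≤ (2 + α) / α :=
    (sum_range_pow_le_inv_one_sub hs₀ hs₁ n).trans_eq (by
      rw [one_sub_div (by positivity), inv_div, add_sub_cancel_left])
  calc 2 * K * 2⁻¹ ^ L * ∑ m ∈ Finset.range n, r ^ m +
        2 * (2 * L + 1) * K * ε * ∑ m ∈ Finset.range n, (2 / (2 + α)) ^ m
      ≤ 2 * K * 2⁻¹ ^ L * 2 + 2 * (2 * L + 1) * K * ε * ((2 + α) / α) := by gcongr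
    _ = _ := by ring

lemma tsum_inv_two_pow_succ : ∑' k : ℕ, (2⁻¹ : ℝ≥0∞) ^ (k + 1) = 1 := by
  rw [ENNReal.tsum_geometric_add_one, ENNReal.one_sub_inv_two, inv_inv,
    ENNReal.inv_mul_cancel two_ne_zero ofNat_ne_top]

lemma tsum_tail_scale_le {δ K : ℝ} (hδ : 0 ≤ δ) (hK : 0 ≤ K) (M : ℕ) :
    ∑' k : ℕ, ENNReal.ofReal (2 ^ (k + (M + 1)) * (K * 2 ^ (-(2 + δ) * ↑(k + (M + 1)))))
      ≤ ENNReal.ofReal (K * 2 ^ (-(1 + δ) * M)) := by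
  set r : ℝ := 2 ^ (-(1 + δ))
  have hr₀ : 0 ≤ r := by positivity
  have hr : r ≤ 2⁻¹ := rpow_neg_one_add_le_inv_two hδ
  have hrM : r ^ M = 2 ^ (-(1 + δ) * M) := by rw [← Real.rpow_natCast, ← Real.rpow_mul zero_le_two]
  have hterm (k : ℕ) : ENNReal.ofReal (2 ^ (k + (M + 1)) * (K * 2 ^ (-(2 + δ) * ↑(k + (M + 1)))))
      ≤ ENNReal.ofReal (K * 2 ^ (-(1 + δ) * M)) * 2⁻¹ ^ (k + 1) := by
    rw [mul_left_comm, two_pow_mul_rpow_eq_pow, ← hrM, ← ENNReal.ofReal_ofNat 2,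
      ← ENNReal.ofReal_inv_of_pos two_pos, ← ENNReal.ofReal_pow (by norm_num),
      ← ENNReal.ofReal_mul (by positivity)]
    refine ENNReal.ofReal_le_ofReal ?_
    change K * r ^ (k + (M + 1)) ≤ _
    rw [show k + (M + 1) = M + (k + 1) by ring, pow_add, ← mul_assoc]
    gcongr
  calc _ ≤ ∑' k : ℕ, ENNReal.ofReal (K * 2 ^ (-(1 + δ) * M)) * 2⁻¹ ^ (k + 1) :=
        ENNReal.tsum_le_tsum hterm
    _ = ENNReal.ofReal (K * 2 ^ (-(1 + δ) * M)) := by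
        rw [ENNReal.tsum_mul_left, tsum_inv_two_pow_succ, mul_one]

lemma tsum_le_of_scale_bounds {α δ K ε : ℝ} (hα : 0 < α) (hδ : 0 ≤ δ) (hK : 0 ≤ K) (hε : 0 ≤ ε)
    {M L : ℕ} (hL : 1 ≤ L) {T : ℕ → ℝ≥0∞}
    (hT : ∀ m ≤ M, T m ≤ ENNReal.ofReal (2 ^ (m + 1) * (2⁻¹ ^ L * (K * 2 ^ (-(2 + δ) * m)) +
        (2 * L + 1) * (K * (2 + α) ^ (-(m : ℝ)) * ε))))
    (hT' : ∀ m, M < m → T m ≤ ENNReal.ofReal (2 ^ m * (K * 2 ^ (-(2 + δ) * m)))) :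
    ∑' m, T m ≤ ENNReal.ofReal (6 * K * ((2 + α) / α) *
      ((2 : ℝ) ^ (-(L : ℝ)) + L * ε + (2 : ℝ) ^ (-(1 + δ) * M))) := by
  have hc : 1 ≤ (2 + α) / α := by rw [le_div_iff₀ hα]; linarith
  have hL' : (1 : ℝ) ≤ L := by exact_mod_cast hL
  have h2L : (2 : ℝ) ^ (-(L : ℝ)) = 2⁻¹ ^ L := by
    rw [Real.rpow_neg zero_le_two, Real.rpow_natCast, inv_pow]
  calc ∑' m, T m = ∑ m ∈ Finset.range (M + 1), T m + ∑' k, T (k + (M + 1)) :=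
        (Summable.sum_add_tsum_nat_add' ENNReal.summable).symm
    _ ≤ ENNReal.ofReal (4 * K * 2⁻¹ ^ L + 2 * (2 * L + 1) * K * ε * ((2 + α) / α)) +
        ENNReal.ofReal (K * 2 ^ (-(1 + δ) * M)) := by
      refine add_le_add ?_ ((ENNReal.tsum_le_tsum fun k => hT' _ (by omega)).trans
        (tsum_tail_scale_le hδ hK M))
      refine (Finset.sum_le_sum fun m hm => hT m (Nat.lt_succ_iff.1 (Finset.mem_range.1 hm))).trans ?_
      rw [← ENNReal.ofReal_sum_of_nonneg fun m _ => by positivity]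
      exact ENNReal.ofReal_le_ofReal (sum_range_scale_le hα hδ hK hε L (M + 1))
    _ ≤ _ := by
      rw [← ENNReal.ofReal_add (by positivity) (by positivity), h2L]
      refine ENNReal.ofReal_le_ofReal ?_
      have h₁ : 0 ≤ K * 2⁻¹ ^ L * ((2 + α) / α - 1) := by
        have := sub_nonneg.2 hc; positivity
      have h₂ : 0 ≤ K * ε * ((2 + α) / α) * (L - 1) := by
        have := sub_nonneg.2 hL'; positivity
      have h₃ : 0 ≤ K * 2 ^ (-(1 + δ) * M) * ((2 + α) / α - 1) := by
        have := sub_nonneg.2 hc; positivity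
      nlinarith [mul_nonneg hK (pow_nonneg (inv_nonneg.2 zero_le_two) L),
        mul_nonneg hK (Real.rpow_nonneg zero_le_two (-(1 + δ) * M))]

lemma WpPow_one_le_transportCost {P Q : Measure ℝ} {π : Measure (ℝ × ℝ)} (h₁ : π.fst = P)
    (h₂ : π.snd = Q) : WpPow 1 P Q ≤ transportCost π :=
  iInf_le_of_le π <| iInf_le_of_le h₁ <| iInf_le_of_le h₂ <| le_of_eq <| by
    simp only [Real.rpow_one, transportCost, edist_dist, Real.dist_eq]

/-- For `p = 1`: under the tail bounds `P(B_m)+Q(B_m) ≤ K 2^{-(2+δ)m}` and the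
cellwise closeness `|P(π_m⁻¹F ∩ B_m) - Q(π_m⁻¹F ∩ B_m)| ≤ K (2+α)^{-m} ε` for
`m ≤ M`, `F ∈ 𝒫_l`, `l ≤ L`, one has
`W_1(P,Q) ≤ K'(2^{-L} + L ε + 2^{-(1+δ)M})` with `K'` depending only on `α, K`. -/
theorem W1_le_of_tail_and_cell_bounds (α K : ℝ) (hα : 0 < α) (hK : 0 < K) :
    ∃ K' : ℝ, 0 < K' ∧
      ∀ (δ ε : ℝ), 0 < δ → 0 < ε → ∀ (M L : ℕ), 1 ≤ M → 1 ≤ L →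
        ∀ (P Q : Measure ℝ), IsProbabilityMeasure P → IsProbabilityMeasure Q →
          (∀ m : ℕ, (P (dyadicB m)).toReal + (Q (dyadicB m)).toReal
              ≤ K * (2 : ℝ) ^ (-(2 + δ) * m)) →
          (∀ m ≤ M, ∀ l ≤ L, ∀ j < 2 ^ l,
            |(P (cellInAnnulus m l j)).toReal - (Q (cellInAnnulus m l j)).toReal|
              ≤ K * (2 + α) ^ (-(m : ℝ)) * ε) →
          WpPow 1 P Q ≤ ENNReal.ofReal (K' *
            ((2 : ℝ) ^ (-(L : ℝ)) + L * ε + (2 : ℝ) ^ (-(1 + δ) * M))) := by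
  refine ⟨6 * K * ((2 + α) / α), by positivity, ?_⟩
  intro δ ε hδ hε M L _ hL P Q hP hQ htail hcell
  have hmass (m : ℕ) :
      P (dyadicB m) + Q (dyadicB m) ≤ ENNReal.ofReal (K * 2 ^ (-(2 + δ) * m)) := by
    rw [ENNReal.le_ofReal_iff_toReal_le (by finiteness) (by positivity),
      ENNReal.toReal_add (measure_ne_top _ _) (measure_ne_top _ _)]
    exact htail m
  have hπ (m : ℕ) : ∃ π, IsSubcoupling π (P.restrict (dyadicB m)) (Q.restrict (dyadicB m)) ∧
      (m ≤ M → annulusCost P Q m π ≤ ENNReal.ofReal (2 ^ (m + 1) *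
        (2⁻¹ ^ L * (K * 2 ^ (-(2 + δ) * m)) + (2 * L + 1) * (K * (2 + α) ^ (-(m : ℝ)) * ε)))) ∧
      (M < m → annulusCost P Q m π ≤ ENNReal.ofReal (2 ^ m * (K * 2 ^ (-(2 + δ) * m)))) := by
    by_cases hm : m ≤ M
    · obtain ⟨π, hπ, hcost⟩ := exists_isSubcoupling_dyadicB P Q m L (by positivity)
        (le_self_add.trans (hmass m)) (hcell m hm)
      exact ⟨π, hπ, fun _ => hcost, fun h => absurd hm h.not_ge⟩
    · exact ⟨0, .zero, fun h => absurd h hm, fun _ => annulusCost_zero_le (hmass m)⟩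
  choose π hπ hcost hcost' using hπ
  obtain ⟨ρ, hρ₁, hρ₂, hρ⟩ := exists_coupling_transportCost_le_tsum 0 measurableSet_dyadicB
    pairwise_disjoint_dyadicB iUnion_dyadicB dyadicB_subset_closedEBall
    (by rw [measure_univ, measure_univ]) hπ
  exact (WpPow_one_le_transportCost hρ₁ hρ₂).trans
    (hρ.trans (tsum_le_of_scale_bounds hα hδ.le hK.le hε.le hL hcost hcost'))
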